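/- Let G be k-contractible to the (r × q) grid via ψ, and let S ⊆ V(G) with |S| = q be such that ψ restricted to S is injective, ψ(S) is a connected set in the grid, and ψ(S) separates corner (1,1) from (r,1) and corner (1,q) from (r,q) in the grid. Then ψ(S) is exactly the set of vertices of some row of the grid. -/

import Mathlib

open SimpleGraph

/-- The `(r × q)` grid graph on vertex set `Fin r × Fin q`:
`(i₁,j₁)` is adjacent to `(i₂,j₂)` iff `|i₁−i₂| + |j₁−j₂| = 1`. -/
def gridGraph (r q : ℕ) : SimpleGraph (Fin r × Fin q) where
  Adj u v := Nat.dist u.1.val v.1.val + Nat.dist u.2.val v.2.val = 1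
  symm := by
    constructor
    intro u v h
    rw [Nat.dist_comm u.1.val, Nat.dist_comm u.2.val] at h
    exact h
  loopless := by
    constructor
    intro u h
    simp [Nat.dist_self] at h

/-- `S` separates `u` from `v` in `G`: every walk from `u` to `v` meets `S`. -/
def Separates {V : Type*} (G : SimpleGraph V) (S : Set V) (u v : V) : Prop :=
  ∀ p : G.Walk u v, ∃ x ∈ p.support, x ∈ S

/-- `ψ` witnesses that `G` is contractible to `H`: `ψ` is onto, every fiber induces a
(nonempty) connected subgraph, and adjacency in `H` corresponds exactly to existence
of an edge of `G` between the fibers. -/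
def IsContractionMap {V W : Type*} (G : SimpleGraph V) (H : SimpleGraph W)
    (ψ : V → W) : Prop :=
  Function.Surjective ψ ∧
  (∀ w : W, (G.induce (ψ ⁻¹' {w})).Connected) ∧
  (∀ w w' : W, H.Adj w w' ↔ ∃ u v : V, ψ u = w ∧ ψ v = w' ∧ G.Adj u v)

/-- The number of edge contractions used by a contraction map: `∑_w (|ψ⁻¹(w)| − 1)`. -/
noncomputable def contractionCost {V W : Type*} [Fintype W] (ψ : V → W) : ℕ :=
  ∑ w : W, ((ψ ⁻¹' {w}).ncard - 1)

/-- Two vertex sets are adjacent if there is an edge with one endpoint in each. -/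
def SetAdj {V : Type*} (G : SimpleGraph V) (X Y : Set V) : Prop :=
  ∃ x ∈ X, ∃ y ∈ Y, G.Adj x y

/-- The (external) neighborhood of a vertex set. -/
def extNbhd {V : Type*} (G : SimpleGraph V) (X : Set V) : Set V :=
  {v | v ∉ X ∧ ∃ x ∈ X, G.Adj x v}

/-- The set of vertices of `G` lying in connected component `c` of `G − S`. -/
def compSupp {V : Type*} (G : SimpleGraph V) (S : Set V)
    (c : (G.induce Sᶜ).ConnectedComponent) : Set V :=
  {v : V | ∃ h : v ∈ Sᶜ, (G.induce Sᶜ).connectedComponentMk ⟨v, h⟩ = c}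

/-!
The two separators force `ψ(S)` to meet the first and the last column, since each column is a
path joining the two corners it separates; by connectivity `ψ(S)` then meets every column.
Having only `q = |S|` cells it meets each column exactly once, so it contains no vertical grid
edge; being connected, it lies in a single row, which it then fills.
-/

theorem Set.SurjOn.injOn_of_ncard_le {α β : Type*} {f : α → β} {s : Set α} {t : Set β}
    (h : Set.SurjOn f s t) (hs : s.Finite) (hst : s.ncard ≤ t.ncard) : Set.InjOn f s := by
  refine (Set.ncard_image_iff hs).1 (le_antisymm (Set.ncard_image_le hs) ?_)
  calc s.ncard ≤ t.ncard := hst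
    _ ≤ (f '' s).ncard := Set.ncard_le_ncard h (hs.image f)

namespace SimpleGraph

variable {V : Type*} {G : SimpleGraph V} {u v : V}

theorem Walk.apply_eq_of_forall_adj {β : Type*} {f : V → β}
    (hf : ∀ x y, G.Adj x y → f x = f y) (p : G.Walk u v) : f u = f v := by
  induction p with
  | nil => rfl
  | cons h _ ih => exact (hf _ _ h).trans ih

theorem Walk.exists_mem_support_apply_eq {f : V → ℕ} (hf : ∀ x y, G.Adj x y → f y ≤ f x + 1)
    (p : G.Walk u v) {m : ℕ} (hu : f u ≤ m) (hv : m ≤ f v) : ∃ x ∈ p.support, f x = m := by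
  induction p with
  | nil => exact ⟨_, List.mem_singleton_self _, le_antisymm hu hv⟩
  | @cons a b _ h _ ih =>
    by_cases ha : f a = m
    · exact ⟨a, List.mem_cons_self, ha⟩
    · obtain ⟨x, hx, hxm⟩ := ih (by have := hf a b h; omega) hv
      exact ⟨x, List.mem_cons_of_mem _ hx, hxm⟩

end SimpleGraph

open SimpleGraph

section Grid

variable {r q : ℕ}

theorem gridGraph_adj_snd_le {x y : Fin r × Fin q} (h : (gridGraph r q).Adj x y) :
    y.2.val ≤ x.2.val + 1 := by
  change Nat.dist _ _ + Nat.dist _ _ = 1 at h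
  simp only [Nat.dist] at h
  omega

theorem gridGraph_fst_eq_of_adj {x y : Fin r × Fin q} (h : (gridGraph r q).Adj x y)
    (hne : x.2 ≠ y.2) : x.1 = y.1 := by
  change Nat.dist _ _ + Nat.dist _ _ = 1 at h
  simp only [Nat.dist] at h
  have := Fin.val_ne_of_ne hne
  ext
  omega

def gridColumnHom (r : ℕ) {q : ℕ} (c : Fin q) : pathGraph r →g gridGraph r q where
  toFun i := (i, c)
  map_rel' {i j} h := by
    change Nat.dist _ _ + Nat.dist _ _ = 1
    rw [pathGraph_adj] at h
    simp only [Nat.dist]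
    omega

theorem gridColumnHom_apply (r : ℕ) {q : ℕ} (c : Fin q) (i : Fin r) :
    gridColumnHom r c i = (i, c) :=
  rfl

theorem Separates.exists_mem_snd_eq {T : Set (Fin r × Fin q)} {i i' : Fin r} {c : Fin q}
    (h : Separates (gridGraph r q) T (i, c) (i', c)) : ∃ x ∈ T, x.2 = c := by
  obtain ⟨p⟩ := pathGraph_preconnected r i i'
  obtain ⟨x, hx, hxT⟩ :=
    h ((p.map (gridColumnHom r c)).copy (gridColumnHom_apply r c i) (gridColumnHom_apply r c i'))
  rw [Walk.support_copy, Walk.support_map, List.mem_map] at hx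
  obtain ⟨j, -, rfl⟩ := hx
  exact ⟨_, hxT, rfl⟩

variable {T : Set (Fin r × Fin q)}

theorem exists_mem_snd_eq_of_preconnected (hT : ((gridGraph r q).induce T).Preconnected)
    {a b : Fin r × Fin q} (ha : a ∈ T) (hb : b ∈ T) {j : Fin q} (haj : a.2 ≤ j) (hjb : j ≤ b.2) :
    ∃ x ∈ T, x.2 = j := by
  obtain ⟨p⟩ := hT ⟨a, ha⟩ ⟨b, hb⟩
  obtain ⟨x, -, hx⟩ := p.exists_mem_support_apply_eq (f := fun x : T => x.val.2.val)
    (fun _ _ h => gridGraph_adj_snd_le h) haj hjb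
  exact ⟨x, x.2, Fin.ext hx⟩

theorem eq_row_of_preconnected_of_ncard_le (hT : ((gridGraph r q).induce T).Preconnected)
    (hcard : T.ncard ≤ q) (hcols : ∀ j, ∃ x ∈ T, x.2 = j) {a : Fin r × Fin q} (ha : a ∈ T) :
    T = {p | p.1 = a.1} := by
  have hinj : Set.InjOn Prod.snd T := by
    refine Set.SurjOn.injOn_of_ncard_le (t := Set.univ) (fun j _ => hcols j) T.toFinite ?_
    rwa [Set.ncard_univ, Nat.card_eq_fintype_card, Fintype.card_fin]
  have hrow : ∀ x ∈ T, x.1 = a.1 := by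
    intro x hx
    obtain ⟨p⟩ := hT ⟨a, ha⟩ ⟨x, hx⟩
    refine (p.apply_eq_of_forall_adj (f := fun x => x.val.1) fun y z h => ?_).symm
    exact gridGraph_fst_eq_of_adj h fun he => h.ne (Subtype.ext (hinj y.2 z.2 he))
  refine Set.Subset.antisymm hrow fun p hp => ?_
  obtain ⟨x, hx, hxp⟩ := hcols p.2
  rwa [← Prod.ext ((hrow x hx).trans hp.symm) hxp]

end Grid

theorem image_is_row {V : Type*}
    (r q : ℕ) (hr : 0 < r) (hq : 0 < q) (ψ : V → Fin r × Fin q)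
    (S : Set V) (hcard : S.ncard = q) (hinj : Set.InjOn ψ S)
    (hconn : ((gridGraph r q).induce (ψ '' S)).Connected)
    (hsep1 : Separates (gridGraph r q) (ψ '' S) (⟨0, hr⟩, ⟨0, hq⟩)
      (⟨r - 1, by omega⟩, ⟨0, hq⟩))
    (hsep2 : Separates (gridGraph r q) (ψ '' S) (⟨0, hr⟩, ⟨q - 1, by omega⟩)
      (⟨r - 1, by omega⟩, ⟨q - 1, by omega⟩)) :
    ∃ i₀ : Fin r, ψ '' S = {p : Fin r × Fin q | p.1 = i₀} := by
  obtain ⟨a, ha, ha0⟩ := hsep1.exists_mem_snd_eq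
  obtain ⟨b, hb, hblast⟩ := hsep2.exists_mem_snd_eq
  have hcols : ∀ j, ∃ x ∈ ψ '' S, x.2 = j := fun j =>
    exists_mem_snd_eq_of_preconnected hconn.preconnected ha hb
      (by rw [ha0]; exact Nat.zero_le _) (by rw [hblast]; exact Nat.le_pred_of_lt j.isLt)
  have hTcard : (ψ '' S).ncard = q := by rw [hinj.ncard_image, hcard]
  exact ⟨a.1, eq_row_of_preconnected_of_ncard_le hconn.preconnected hTcard.le hcols ha⟩
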